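/- Main value-error decomposition (Theorem 1): Fix task MDP M_i with bounded rewards |R_i| ≤ R_max, encoder Φ : S → C, latent Markov approximation (P̄_i^Φ, R̄_i^Φ), a learned world model (P̂(·|c,a,z), R̂(c,a,z)) also conditioned on the true task index i, and a latent policy π. Assume: (abstraction) ‖P_i^Φ(·|s,a) − P̄_i^Φ(·|Φ(s),a)‖₁ ≤ ε_abs^P and |R_i(s,a) − R̄_i^Φ(Φ(s),a)| ≤ ε_abs^R for all (s,a); (model) ‖P̂(·|c,a,i) − P̄_i^Φ(·|c,a)‖₁ ≤ ε_mod^P and |R̂(c,a,i) − R̄_i^Φ(c,a)| ≤ ε_mod^R for all (c,a); (task inference) ‖P̂(·|c,a,z) − P̂(·|c,a,i)‖₁ ≤ ε_task^P and |R̂(c,a,z) − R̂(c,a,i)| ≤ ε_task^R for all (c,a). Assume all reward functions are bounded by R_max. Then sup_s |V_{M_i}^{π^Φ}(s) − V_{M̂(z)}^{π}(Φ(s))| ≤ (ε_abs^R + ε_mod^R + ε_task^R)/(1−γ) + γ R_max (ε_abs^P + ε_mod^P + ε_task^P)/(1−γ)², where M̂(z) is the latent MDP induced by (P̂(·|c,a,z),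 R̂(c,a,z)) and π^Φ(a|s) = π(a|Φ(s)). -/

import Mathlib

open Finset Filter Topology

/-- The state distribution at time `n` when starting from state `x0`,
following policy `π` and transition kernel `P`. -/
noncomputable def stateDist {X A : Type*} [Fintype X] [Fintype A] [DecidableEq X]
    (P : X → A → X → ℝ) (π : X → A → ℝ) (x0 : X) : ℕ → X → ℝ
  | 0 => fun x => if x = x0 then 1 else 0
  | n + 1 => fun x' => ∑ x, ∑ a, stateDist P π x0 n x * π x a * P x a x'

/-- The infinite-horizon discounted value of stationary policy `π` in the MDP
with reward `R`, transition kernel `P`, and discount `γ`, starting from `x0`. -/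
noncomputable def value {X A : Type*} [Fintype X] [Fintype A] [DecidableEq X]
    (R : X → A → ℝ) (P : X → A → X → ℝ) (π : X → A → ℝ) (γ : ℝ) (x0 : X) : ℝ :=
  ∑' n : ℕ, γ ^ n * ∑ x, ∑ a, stateDist P π x0 n x * π x a * R x a

/-- The policy Bellman operator. -/
noncomputable def bellmanOp {X A : Type*} [Fintype X] [Fintype A]
    (R : X → A → ℝ) (P : X → A → X → ℝ) (π : X → A → ℝ) (γ : ℝ)
    (V : X → ℝ) : X → ℝ :=
  fun x => ∑ a, π x a * (R x a + γ * ∑ x', P x a x' * V x')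

/-- The pushforward transition kernel induced by an encoder `Φ`. -/
noncomputable def pushKernel {S A C : Type*} [Fintype S] [DecidableEq C]
    (P : S → A → S → ℝ) (Φ : S → C) : S → A → C → ℝ :=
  fun s a c => ∑ s', P s a s' * (if Φ s' = c then 1 else 0)

/-! Writing `M` for the state-transition matrix of the policy and `r` for its expected one-step
reward, the value is `∑ γⁿ Mⁿ r`; as `M` is row stochastic this series converges, is bounded by
`R_max / (1 - γ)` and is a fixed point of the Bellman operator `V ↦ r + γ M V`.

Let `V` be the value in the true MDP and `W` the one in the latent model, and evaluate their
Bellman equations at a state `s₀` maximising `D = |V s - W (Φ s)|`. The rewards differ by at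
most `ε_R = ε_abs^R + ε_mod^R + ε_task^R` and, by pushing `P` forward along `Φ`, the next-state
expectations differ by `E_P[V - W ∘ Φ] + ⟨P^Φ - P̂, W⟩`, which is at most
`D + ε_P R_max / (1 - γ)` with `ε_P = ε_abs^P + ε_mod^P + ε_task^P`. Both error budgets come from
the triangle inequality through `R̄, P̄` and the model at the true task `i`. Hence
`D ≤ ε_R + γ (D + ε_P R_max / (1 - γ))`, which rearranges to the claim. -/

open Matrix

lemma abs_sub_le_abs_sub_add_abs_sub_add_abs_sub (a b c d : ℝ) :
    |a - d| ≤ |a - b| + |c - b| + |d - c| := by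
  rw [abs_sub_comm c, abs_sub_comm d]
  exact (abs_sub_le a c d).trans (add_le_add_left (abs_sub_le a b c) _) |>.trans_eq (by ring)

section Weights

variable {ι : Type*} [Fintype ι]

lemma abs_sum_mul_le_of_sum_eq_one {p f : ι → ℝ} {B : ℝ} (hp0 : ∀ i, 0 ≤ p i)
    (hp1 : ∑ i, p i = 1) (hf : ∀ i, |f i| ≤ B) : |∑ i, p i * f i| ≤ B :=
  calc |∑ i, p i * f i| ≤ ∑ i, |p i * f i| := abs_sum_le_sum_abs _ _
    _ ≤ ∑ i, p i * B := sum_le_sum fun i _ => by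
        rw [abs_mul, abs_of_nonneg (hp0 i)]
        exact mul_le_mul_of_nonneg_left (hf i) (hp0 i)
    _ = B := by rw [← sum_mul, hp1, one_mul]

lemma abs_sum_mul_le_sum_abs_mul {u f : ι → ℝ} {B : ℝ} (hf : ∀ i, |f i| ≤ B) :
    |∑ i, u i * f i| ≤ (∑ i, |u i|) * B :=
  calc |∑ i, u i * f i| ≤ ∑ i, |u i * f i| := abs_sum_le_sum_abs _ _
    _ ≤ ∑ i, |u i| * B := sum_le_sum fun i _ => by
        rw [abs_mul]
        exact mul_le_mul_of_nonneg_left (hf i) (abs_nonneg _)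
    _ = (∑ i, |u i|) * B := (sum_mul _ _ _).symm

end Weights

namespace Matrix

variable {X : Type*} [Fintype X] [DecidableEq X] {M : Matrix X X ℝ} {v : X → ℝ} {B γ : ℝ}

lemma abs_mulVec_le_of_mem_rowStochastic (hM : M ∈ rowStochastic ℝ X)
    (hv : ∀ x, |v x| ≤ B) (x : X) : |(M *ᵥ v) x| ≤ B :=
  abs_sum_mul_le_of_sum_eq_one (fun _ => nonneg_of_mem_rowStochastic hM)
    (sum_row_of_mem_rowStochastic hM x) hv

lemma norm_discounted_pow_mulVec_le (hM : M ∈ rowStochastic ℝ X) (hγ0 : 0 ≤ γ)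
    (hv : ∀ x, |v x| ≤ B) (x : X) (n : ℕ) : ‖γ ^ n * (M ^ n *ᵥ v) x‖ ≤ γ ^ n * B := by
  rw [Real.norm_eq_abs, abs_mul, abs_of_nonneg (pow_nonneg hγ0 n)]
  exact mul_le_mul_of_nonneg_left
    (abs_mulVec_le_of_mem_rowStochastic (pow_mem hM n) hv x) (pow_nonneg hγ0 n)

lemma summable_discounted_pow_mulVec (hM : M ∈ rowStochastic ℝ X) (hγ0 : 0 ≤ γ) (hγ1 : γ < 1)
    (x : X) : Summable fun n => γ ^ n * (M ^ n *ᵥ v) x :=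
  .of_norm_bounded ((summable_geometric_of_lt_one hγ0 hγ1).mul_right _)
    (norm_discounted_pow_mulVec_le hM hγ0 (fun y => single_le_sum (f := fun y => |v y|)
      (fun _ _ => abs_nonneg _) (mem_univ y)) x)

lemma abs_tsum_discounted_pow_mulVec_le (hM : M ∈ rowStochastic ℝ X) (hγ0 : 0 ≤ γ)
    (hγ1 : γ < 1) (hv : ∀ x, |v x| ≤ B) (x : X) :
    |∑' n, γ ^ n * (M ^ n *ᵥ v) x| ≤ B / (1 - γ) := by
  rw [div_eq_inv_mul]
  exact tsum_of_norm_bounded ((hasSum_geometric_of_lt_one hγ0 hγ1).mul_right B)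
    (norm_discounted_pow_mulVec_le hM hγ0 hv x)

lemma tsum_discounted_pow_mulVec_eq (hM : M ∈ rowStochastic ℝ X) (hγ0 : 0 ≤ γ) (hγ1 : γ < 1)
    (x : X) : ∑' n, γ ^ n * (M ^ n *ᵥ v) x =
      v x + γ * (M *ᵥ fun y => ∑' n, γ ^ n * (M ^ n *ᵥ v) y) x := by
  have hs := summable_discounted_pow_mulVec (v := v) hM hγ0 hγ1
  have hsucc (n : ℕ) : γ ^ (n + 1) * (M ^ (n + 1) *ᵥ v) x =
      ∑ y, γ * (M x y * (γ ^ n * (M ^ n *ᵥ v) y)) := by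
    rw [pow_succ' γ, pow_succ' M, ← mulVec_mulVec, mulVec, dotProduct, mul_sum]
    exact sum_congr rfl fun y _ => by ring
  rw [(hs x).tsum_eq_zero_add, tsum_congr hsucc,
    Summable.tsum_finsetSum fun y _ => ((hs y).mul_left _).mul_left _,
    pow_zero, pow_zero, one_mul, one_mulVec, mulVec, dotProduct, mul_sum]
  simp only [tsum_mul_left]

end Matrix

section PolicyEvaluation

variable {X A : Type*} [Fintype X] [Fintype A]
  {R : X → A → ℝ} {P : X → A → X → ℝ} {π : X → A → ℝ} {γ : ℝ}

noncomputable def policyMatrix (P : X → A → X → ℝ) (π : X → A → ℝ) : Matrix X X ℝ :=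
  of fun x y => ∑ a, π x a * P x a y

noncomputable def policyReward (R : X → A → ℝ) (π : X → A → ℝ) : X → ℝ :=
  fun x => ∑ a, π x a * R x a

lemma bellmanOp_apply (R : X → A → ℝ) (P : X → A → X → ℝ) (π : X → A → ℝ) (γ : ℝ)
    (V : X → ℝ) (x : X) :
    bellmanOp R P π γ V x = policyReward R π x + γ * (policyMatrix P π *ᵥ V) x := by
  simp only [bellmanOp, policyReward, policyMatrix, mulVec, dotProduct, of_apply, sum_mul,
    mul_sum, mul_add, sum_add_distrib]
  congr 1
  rw [sum_comm]
  exact sum_congr rfl fun a _ => sum_congr rfl fun y _ => by ring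

variable [DecidableEq X]

lemma policyMatrix_mem_rowStochastic (hπ0 : ∀ x a, 0 ≤ π x a) (hπ1 : ∀ x, ∑ a, π x a = 1)
    (hP0 : ∀ x a y, 0 ≤ P x a y) (hP1 : ∀ x a, ∑ y, P x a y = 1) :
    policyMatrix P π ∈ rowStochastic ℝ X := by
  refine mem_rowStochastic_iff_sum.2 ⟨fun x y => sum_nonneg fun a _ =>
    mul_nonneg (hπ0 x a) (hP0 x a y), fun x => ?_⟩
  simp only [policyMatrix, of_apply]
  rw [sum_comm]
  simp only [← mul_sum, hP1, mul_one, hπ1]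

lemma stateDist_eq_policyMatrix_pow (P : X → A → X → ℝ) (π : X → A → ℝ) (x0 : X) (n : ℕ)
    (y : X) : stateDist P π x0 n y = (policyMatrix P π ^ n) x0 y := by
  induction n generalizing y with
  | zero => simp [stateDist, one_apply, eq_comm]
  | succ n ih =>
    simp only [stateDist, pow_succ, mul_apply, ih, policyMatrix, of_apply, mul_sum, mul_assoc]

lemma value_eq_tsum_policyMatrix_pow (R : X → A → ℝ) (P : X → A → X → ℝ) (π : X → A → ℝ)
    (γ : ℝ) (x0 : X) :
    value R P π γ x0 = ∑' n, γ ^ n * (policyMatrix P π ^ n *ᵥ policyReward R π) x0 := by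
  simp only [value, stateDist_eq_policyMatrix_pow, mulVec, dotProduct, policyReward, mul_sum,
    mul_assoc]

lemma isFixedPt_bellmanOp_value (hγ0 : 0 ≤ γ) (hγ1 : γ < 1) (hπ0 : ∀ x a, 0 ≤ π x a)
    (hπ1 : ∀ x, ∑ a, π x a = 1) (hP0 : ∀ x a y, 0 ≤ P x a y) (hP1 : ∀ x a, ∑ y, P x a y = 1) :
    Function.IsFixedPt (bellmanOp R P π γ) (value R P π γ) := by
  have hvalue : value R P π γ =
      fun x => ∑' n, γ ^ n * (policyMatrix P π ^ n *ᵥ policyReward R π) x :=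
    funext (value_eq_tsum_policyMatrix_pow R P π γ)
  funext x
  rw [bellmanOp_apply, hvalue]
  exact (tsum_discounted_pow_mulVec_eq
    (policyMatrix_mem_rowStochastic hπ0 hπ1 hP0 hP1) hγ0 hγ1 x).symm

lemma abs_value_le {B : ℝ} (hγ0 : 0 ≤ γ) (hγ1 : γ < 1) (hπ0 : ∀ x a, 0 ≤ π x a)
    (hπ1 : ∀ x, ∑ a, π x a = 1) (hP0 : ∀ x a y, 0 ≤ P x a y) (hP1 : ∀ x a, ∑ y, P x a y = 1)
    (hR : ∀ x a, |R x a| ≤ B) (x : X) : |value R P π γ x| ≤ B / (1 - γ) := by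
  rw [value_eq_tsum_policyMatrix_pow]
  exact abs_tsum_discounted_pow_mulVec_le (policyMatrix_mem_rowStochastic hπ0 hπ1 hP0 hP1)
    hγ0 hγ1 (fun y => abs_sum_mul_le_of_sum_eq_one (hπ0 y) (hπ1 y) (hR y)) x

end PolicyEvaluation

section Abstraction

variable {S C A : Type*} [Fintype S] [Fintype C] [DecidableEq C]

lemma sum_pushKernel_mul (P : S → A → S → ℝ) (Φ : S → C) (f : C → ℝ) (s : S) (a : A) :
    ∑ c, pushKernel P Φ s a c * f c = ∑ s', P s a s' * f (Φ s') := by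
  simp only [pushKernel, sum_mul, mul_ite, mul_one, mul_zero, ite_mul, zero_mul]
  rw [sum_comm]
  simp

lemma abs_sum_mul_sub_sum_mul_le {P : S → A → S → ℝ} {Φ : S → C} {s : S} {a : A}
    (hP0 : ∀ s', 0 ≤ P s a s') (hP1 : ∑ s', P s a s' = 1) (q : C → ℝ) {V : S → ℝ} {W : C → ℝ}
    {D M : ℝ} (hD : ∀ s', |V s' - W (Φ s')| ≤ D) (hW : ∀ c, |W c| ≤ M) :
    |∑ s', P s a s' * V s' - ∑ c, q c * W c| ≤
      D + (∑ c, |pushKernel P Φ s a c - q c|) * M := by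
  have hsplit : ∑ s', P s a s' * V s' - ∑ c, q c * W c =
      ∑ s', P s a s' * (V s' - W (Φ s')) + ∑ c, (pushKernel P Φ s a c - q c) * W c := by
    simp only [mul_sub, sub_mul, sum_sub_distrib, sum_pushKernel_mul]
    ring
  rw [hsplit]
  exact (abs_add_le _ _).trans (add_le_add (abs_sum_mul_le_of_sum_eq_one hP0 hP1 hD)
    (abs_sum_mul_le_sum_abs_mul hW))

variable [Fintype A] {R : S → A → ℝ} {P : S → A → S → ℝ} {Φ : S → C} {Rh : C → A → ℝ}
  {Q : C → A → C → ℝ} {π : C → A → ℝ} {γ εR εP : ℝ}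

lemma abs_bellmanOp_sub_bellmanOp_comp_le (hγ0 : 0 ≤ γ) (hπ0 : ∀ c a, 0 ≤ π c a)
    (hπ1 : ∀ c, ∑ a, π c a = 1) (hP0 : ∀ s a s', 0 ≤ P s a s') (hP1 : ∀ s a, ∑ s', P s a s' = 1)
    (hR : ∀ s a, |R s a - Rh (Φ s) a| ≤ εR)
    (hP : ∀ s a, ∑ c, |pushKernel P Φ s a c - Q (Φ s) a c| ≤ εP)
    {V : S → ℝ} {W : C → ℝ} {D M : ℝ} (hD : ∀ s, |V s - W (Φ s)| ≤ D) (hW : ∀ c, |W c| ≤ M)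
    (s : S) :
    |bellmanOp R P (fun s a => π (Φ s) a) γ V s - bellmanOp Rh Q π γ W (Φ s)| ≤
      εR + γ * (D + εP * M) := by
  have hM : 0 ≤ M := (abs_nonneg _).trans (hW (Φ s))
  simp only [bellmanOp, ← sum_sub_distrib, ← mul_sub]
  refine abs_sum_mul_le_of_sum_eq_one (hπ0 (Φ s)) (hπ1 (Φ s)) fun a => ?_
  have hstep := abs_sum_mul_sub_sum_mul_le (hP0 s a) (hP1 s a) (Q (Φ s) a) hD hW
  calc |R s a + γ * ∑ s', P s a s' * V s' - (Rh (Φ s) a + γ * ∑ c, Q (Φ s) a c * W c)|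
      = |(R s a - Rh (Φ s) a) + γ * (∑ s', P s a s' * V s' - ∑ c, Q (Φ s) a c * W c)| := by
        congr 1
        ring
    _ ≤ |R s a - Rh (Φ s) a| + γ * |∑ s', P s a s' * V s' - ∑ c, Q (Φ s) a c * W c| :=
        (abs_add_le _ _).trans_eq (by rw [abs_mul, abs_of_nonneg hγ0])
    _ ≤ εR + γ * (D + εP * M) := by
        gcongr
        · exact hR s a
        · exact hstep.trans (by gcongr; exact hP s a)

/-- Simulation lemma for a state abstraction `Φ`. -/
lemma abs_sub_comp_le_of_isFixedPt_bellmanOp (hγ0 : 0 ≤ γ) (hγ1 : γ < 1)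
    (hπ0 : ∀ c a, 0 ≤ π c a) (hπ1 : ∀ c, ∑ a, π c a = 1) (hP0 : ∀ s a s', 0 ≤ P s a s')
    (hP1 : ∀ s a, ∑ s', P s a s' = 1) (hR : ∀ s a, |R s a - Rh (Φ s) a| ≤ εR)
    (hP : ∀ s a, ∑ c, |pushKernel P Φ s a c - Q (Φ s) a c| ≤ εP) {V : S → ℝ} {W : C → ℝ}
    (hV : Function.IsFixedPt (bellmanOp R P (fun s a => π (Φ s) a) γ) V)
    (hW : Function.IsFixedPt (bellmanOp Rh Q π γ) W) {M : ℝ} (hWM : ∀ c, |W c| ≤ M) (s : S) :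
    |V s - W (Φ s)| ≤ (εR + γ * εP * M) / (1 - γ) := by
  obtain ⟨s₀, -, hmax⟩ := exists_max_image univ (fun s => |V s - W (Φ s)|) ⟨s, mem_univ s⟩
  have hD : ∀ s', |V s' - W (Φ s')| ≤ |V s₀ - W (Φ s₀)| := fun s' => hmax s' (mem_univ s')
  have hcontract := abs_bellmanOp_sub_bellmanOp_comp_le hγ0 hπ0 hπ1 hP0 hP1 hR hP hD hWM s₀
  rw [hV.eq, hW.eq] at hcontract
  rw [le_div_iff₀ (sub_pos.2 hγ1)]
  nlinarith [hD s]

end Abstraction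

theorem value_error_decomposition_general
    {S A C Z : Type*} [Fintype S] [Fintype A] [Fintype C]
    [DecidableEq S] [DecidableEq C]
    (R : S → A → ℝ) (P : S → A → S → ℝ) (Φ : S → C)
    (Rbar : C → A → ℝ) (Pbar : C → A → C → ℝ)
    (Rhat : Z → C → A → ℝ) (Phat : Z → C → A → C → ℝ)
    (i z : Z) (π : C → A → ℝ)
    (γ Rmax εabsR εabsP εmodR εmodP εtaskR εtaskP : ℝ)
    (hγ0 : 0 ≤ γ) (hγ1 : γ < 1)
    (hπ0 : ∀ c a, 0 ≤ π c a) (hπ1 : ∀ c, ∑ a, π c a = 1)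
    (hP0 : ∀ s a s', 0 ≤ P s a s') (hP1 : ∀ s a, ∑ s', P s a s' = 1)
    (hPhat0 : ∀ w c a c', 0 ≤ Phat w c a c') (hPhat1 : ∀ w c a, ∑ c', Phat w c a c' = 1)
    (hRhat : ∀ w c a, |Rhat w c a| ≤ Rmax)
    (habsP : ∀ s a, ∑ c', |pushKernel P Φ s a c' - Pbar (Φ s) a c'| ≤ εabsP)
    (habsR : ∀ s a, |R s a - Rbar (Φ s) a| ≤ εabsR)
    (hmodP : ∀ c a, ∑ c', |Phat i c a c' - Pbar c a c'| ≤ εmodP)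
    (hmodR : ∀ c a, |Rhat i c a - Rbar c a| ≤ εmodR)
    (htaskP : ∀ c a, ∑ c', |Phat z c a c' - Phat i c a c'| ≤ εtaskP)
    (htaskR : ∀ c a, |Rhat z c a - Rhat i c a| ≤ εtaskR) :
    ∀ s, |value R P (fun s a => π (Φ s) a) γ s - value (Rhat z) (Phat z) π γ (Φ s)| ≤
      (εabsR + εmodR + εtaskR) / (1 - γ) +
        γ * Rmax * (εabsP + εmodP + εtaskP) / (1 - γ) ^ 2 := by
  intro s
  have hRerr (s : S) (a : A) : |R s a - Rhat z (Φ s) a| ≤ εabsR + εmodR + εtaskR :=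
    (abs_sub_le_abs_sub_add_abs_sub_add_abs_sub _ (Rbar (Φ s) a) (Rhat i (Φ s) a) _).trans
      (by linarith [habsR s a, hmodR (Φ s) a, htaskR (Φ s) a])
  have hPerr (s : S) (a : A) :
      ∑ c, |pushKernel P Φ s a c - Phat z (Φ s) a c| ≤ εabsP + εmodP + εtaskP := calc
    _ ≤ ∑ c, (|pushKernel P Φ s a c - Pbar (Φ s) a c| + |Phat i (Φ s) a c - Pbar (Φ s) a c|
          + |Phat z (Φ s) a c - Phat i (Φ s) a c|) :=
      sum_le_sum fun c _ => abs_sub_le_abs_sub_add_abs_sub_add_abs_sub _ _ _ _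
    _ ≤ εabsP + εmodP + εtaskP := by
      simp only [sum_add_distrib]
      linarith [habsP s a, hmodP (Φ s) a, htaskP (Φ s) a]
  have hbound := abs_sub_comp_le_of_isFixedPt_bellmanOp hγ0 hγ1 hπ0 hπ1 hP0 hP1 hRerr hPerr
    (isFixedPt_bellmanOp_value hγ0 hγ1 (fun s => hπ0 (Φ s)) (fun s => hπ1 (Φ s)) hP0 hP1)
    (isFixedPt_bellmanOp_value hγ0 hγ1 hπ0 hπ1 (hPhat0 z) (hPhat1 z))
    (abs_value_le hγ0 hγ1 hπ0 hπ1 (hPhat0 z) (hPhat1 z) (hRhat z)) s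
  have h1γ : 1 - γ ≠ 0 := by linarith
  refine hbound.trans_eq ?_
  field_simp

theorem value_error_decomposition
    {S A C Z : Type*} [Fintype S] [Fintype A] [Fintype C]
    [DecidableEq S] [DecidableEq C]
    (R : S → A → ℝ) (P : S → A → S → ℝ) (Φ : S → C)
    (Rbar : C → A → ℝ) (Pbar : C → A → C → ℝ)
    (Rhat : Z → C → A → ℝ) (Phat : Z → C → A → C → ℝ)
    (i z : Z) (π : C → A → ℝ)
    (γ Rmax εabsR εabsP εmodR εmodP εtaskR εtaskP : ℝ)
    (hγ0 : 0 ≤ γ) (hγ1 : γ < 1)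
    (hπ0 : ∀ c a, 0 ≤ π c a) (hπ1 : ∀ c, ∑ a, π c a = 1)
    (hP0 : ∀ s a s', 0 ≤ P s a s') (hP1 : ∀ s a, ∑ s', P s a s' = 1)
    (hPbar0 : ∀ c a c', 0 ≤ Pbar c a c') (hPbar1 : ∀ c a, ∑ c', Pbar c a c' = 1)
    (hPhat0 : ∀ w c a c', 0 ≤ Phat w c a c') (hPhat1 : ∀ w c a, ∑ c', Phat w c a c' = 1)
    (hR : ∀ s a, |R s a| ≤ Rmax) (hRbar : ∀ c a, |Rbar c a| ≤ Rmax)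
    (hRhat : ∀ w c a, |Rhat w c a| ≤ Rmax)
    (habsP : ∀ s a, ∑ c', |pushKernel P Φ s a c' - Pbar (Φ s) a c'| ≤ εabsP)
    (habsR : ∀ s a, |R s a - Rbar (Φ s) a| ≤ εabsR)
    (hmodP : ∀ c a, ∑ c', |Phat i c a c' - Pbar c a c'| ≤ εmodP)
    (hmodR : ∀ c a, |Rhat i c a - Rbar c a| ≤ εmodR)
    (htaskP : ∀ c a, ∑ c', |Phat z c a c' - Phat i c a c'| ≤ εtaskP)
    (htaskR : ∀ c a, |Rhat z c a - Rhat i c a| ≤ εtaskR) :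
    ∀ s, |value R P (fun s a => π (Φ s) a) γ s - value (Rhat z) (Phat z) π γ (Φ s)| ≤
      (εabsR + εmodR + εtaskR) / (1 - γ) +
        γ * Rmax * (εabsP + εmodP + εtaskP) / (1 - γ) ^ 2 :=
  value_error_decomposition_general R P Φ Rbar Pbar Rhat Phat i z π γ Rmax εabsR εabsP εmodR εmodP
    εtaskR εtaskP hγ0 hγ1 hπ0 hπ1 hP0 hP1 hPhat0 hPhat1 hRhat habsP habsR hmodP hmodR htaskP htaskR
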